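/- arXiv:1911.07406 — 3 statements merged into one kernel-verified Lean document; each statement's English description precedes it below -/
import Mathlib

section
/- Let S be a dense subsemigroup of (T,+), e ∈ E(T), (X,⟨T_s⟩_{s∈S}) a dynamical system, L a minimal left ideal of e*_S, and x ∈ X. If x is a uniformly recurrent point near e, then there exists u ∈ L with T_u(x) = x. -/
/-!
Let `B` be the set of return times of `x` to a neighbourhood `W`, and `q ∈ L`. As `B` is syndetic
near `e`, some `-t + B` with `t` arbitrarily close to `e` lies in `q`; an ultrafilter `r ∈ e*_S`
concentrated on such `t` then has `B ∈ r + q ∈ L`. The minimal left ideal `L = e*_S + q` is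
compact, so a single `u ∈ L` contains the return sets of all neighbourhoods of `x`, which says
that `T_u(x) = x`.
-/

open Filter Topology Set

attribute [local instance] Ultrafilter.add Ultrafilter.addSemigroup

universe u

section NearIdem

variable {T : Type u} [AddSemigroup T] [TopologicalSpace T]

/-- The set of ultrafilters on `S` converging to `e` (denoted `e*_S`). -/
def EStar (S : AddSubsemigroup T) (e : T) : Set (Ultrafilter S) :=
  {p | ∀ U ∈ nhds e, {s : S | (s : T) ∈ U} ∈ p}

/-- `B ⊆ S` is syndetic near `e`. -/
def SyndeticNear (S : AddSubsemigroup T) (e : T) (B : Set S) : Prop :=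
  ∀ U ∈ nhds e, ∃ F : Finset S, (∀ t ∈ F, (t : T) ∈ U) ∧
    ∃ V ∈ nhds e, ∀ s : S, (s : T) ∈ V → ∃ t ∈ F, t + s ∈ B

/-- `A ⊆ S` is topologically piecewise syndetic near `e`. -/
def TopPWSNear (S : AddSubsemigroup T) (e : T) (A : Set S) : Prop :=
  ∀ U ∈ nhds e, ∃ F : Finset S, (∀ t ∈ F, (t : T) ∈ U) ∧
    ∃ V ∈ nhds e, ∀ G : Finset S, ∀ O ∈ nhds e, ∃ x : S, (x : T) ∈ O ∧
      ∀ g ∈ G, (g : T) ∈ V → ∃ t ∈ F, t + (g + x) ∈ A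

/-- Left ideal of a subsemigroup `E` of `βM`. -/
def IsLeftIdealIn {M : Type*} [AddSemigroup M] (E L : Set (Ultrafilter M)) : Prop :=
  L.Nonempty ∧ L ⊆ E ∧ ∀ p ∈ E, ∀ q ∈ L, p + q ∈ L

/-- Minimal left ideal of `E`. -/
def IsMinimalLeftIdealIn {M : Type*} [AddSemigroup M] (E L : Set (Ultrafilter M)) : Prop :=
  IsLeftIdealIn E L ∧ ∀ L', IsLeftIdealIn E L' → L' ⊆ L → L' = L

/-- The smallest ideal `K(E)`, the union of all minimal left ideals of `E`. -/
def SmallestIdeal {M : Type*} [AddSemigroup M] (E : Set (Ultrafilter M)) : Set (Ultrafilter M) :=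
  {p | ∃ L, IsMinimalLeftIdealIn E L ∧ p ∈ L}

/-- `T_p(x) = p`-`lim_(s ∈ S) T_s(x)`. -/
noncomputable def TP {M : Type*} {X : Type*} [TopologicalSpace X]
    (Ts : M → X → X) (p : Ultrafilter M) (x : X) : X :=
  (p.map fun s => Ts s x).lim

/-- `x` is a uniformly recurrent point near `e`. -/
def UnifRecNear (S : AddSubsemigroup T) (e : T) {X : Type*} [TopologicalSpace X]
    (Ts : S → X → X) (x : X) : Prop :=
  ∀ W ∈ nhds x, SyndeticNear S e {s : S | Ts s x ∈ W}

/-- `x` and `y` are proximal near `e` (characterized via `e*_S`). -/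
noncomputable def ProximalNear (S : AddSubsemigroup T) (e : T) {X : Type*} [TopologicalSpace X]
    (Ts : S → X → X) (x y : X) : Prop :=
  ∃ p ∈ EStar S e, TP Ts p x = TP Ts p y

section EStar

variable {S : AddSubsemigroup T} {e : T}

theorem mem_eStar_iff {p : Ultrafilter S} :
    p ∈ EStar S e ↔ (p : Filter S) ≤ comap ((↑) : S → T) (𝓝 e) := by
  refine ⟨fun hp V hV => ?_, fun hp U hU => hp (preimage_mem_comap hU)⟩
  obtain ⟨U, hU, hUV⟩ := mem_comap.mp hV
  exact mem_of_superset (hp U hU) hUV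

theorem isClosed_eStar : IsClosed (EStar S e) := by
  have : EStar S e = ⋂ U ∈ 𝓝 e, {p : Ultrafilter S | {s : S | (s : T) ∈ U} ∈ p} := by
    ext p
    simp [EStar]
  rw [this]
  exact isClosed_biInter fun U _ => ultrafilter_isClosed_basic _

theorem add_mem_eStar (hl : ∀ t : T, Continuous fun x : T => t + x)
    (hr : ∀ t : T, Continuous fun x : T => x + t) (he : e + e = e) {p q : Ultrafilter S}
    (hp : p ∈ EStar S e) (hq : q ∈ EStar S e) : p + q ∈ EStar S e := by
  intro U hU
  have hUe : (· + e) ⁻¹' interior U ∈ 𝓝 e :=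
    (hr e).continuousAt.preimage_mem_nhds (by rwa [he, interior_mem_nhds])
  refine (Ultrafilter.eventually_add p q _).mpr ?_
  filter_upwards [hp _ hUe] with t ht
  filter_upwards [hq _ ((hl t).continuousAt.preimage_mem_nhds (isOpen_interior.mem_nhds ht))]
    with s hs
  exact interior_subset hs

theorem exists_mem_eStar_of_frequently {D : Set S}
    (hD : ∃ᶠ t in comap ((↑) : S → T) (𝓝 e), t ∈ D) : ∃ r ∈ EStar S e, D ∈ r := by
  obtain ⟨r, hr⟩ := @Ultrafilter.exists_le _ _ (frequently_iff_neBot.mp hD)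
  exact ⟨r, mem_eStar_iff.mpr (hr.trans inf_le_left), hr.trans inf_le_right (mem_principal_self D)⟩

theorem SyndeticNear.frequently_shift_mem {B : Set S} (hB : SyndeticNear S e B)
    {q : Ultrafilter S} (hq : q ∈ EStar S e) :
    ∃ᶠ t in comap ((↑) : S → T) (𝓝 e), {s | t + s ∈ B} ∈ q := by
  rw [((𝓝 e).basis_sets.comap _).frequently_iff]
  intro U hU
  obtain ⟨F, hFU, V, hV, hcover⟩ := hB U hU
  have : (⋃ t ∈ (F : Set S), {s : S | t + s ∈ B}) ∈ q :=
    mem_of_superset (hq V hV) fun s hs => by simpa using hcover s hs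
  obtain ⟨t, htF, ht⟩ := (Ultrafilter.finite_biUnion_mem_iff F.finite_toSet).mp this
  exact ⟨t, hFU t htF, ht⟩

theorem SyndeticNear.exists_mem_of_isLeftIdealIn {B : Set S} (hB : SyndeticNear S e B)
    {L : Set (Ultrafilter S)} (hL : IsLeftIdealIn (EStar S e) L) : ∃ u ∈ L, B ∈ u := by
  obtain ⟨q, hq⟩ := hL.1
  obtain ⟨r, hr, hshift⟩ := exists_mem_eStar_of_frequently (hB.frequently_shift_mem (hL.2.1 hq))
  exact ⟨r + q, hL.2.2 r hr q hq, (Ultrafilter.eventually_add r q _).mpr hshift⟩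

end EStar

section MinimalLeftIdeal

variable {M : Type*} [AddSemigroup M] {E L : Set (Ultrafilter M)}

theorem IsMinimalLeftIdealIn.image_add_right_eq (hE : ∀ p ∈ E, ∀ r ∈ E, p + r ∈ E)
    (hL : IsMinimalLeftIdealIn E L) {q : Ultrafilter M} (hq : q ∈ L) : (· + q) '' E = L := by
  obtain ⟨⟨-, hLE, hLideal⟩, hLmin⟩ := hL
  refine hLmin _ ⟨⟨q + q, q, hLE hq, rfl⟩, ?_, ?_⟩ ?_
  · rintro _ ⟨p, hp, rfl⟩
    exact hLE (hLideal p hp q hq)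
  · rintro p hp _ ⟨p', hp', rfl⟩
    exact ⟨p + p', hE p hp p' hp', add_assoc p p' q⟩
  · rintro _ ⟨p, hp, rfl⟩
    exact hLideal p hp q hq

theorem IsMinimalLeftIdealIn.isCompact (hEc : IsClosed E) (hE : ∀ p ∈ E, ∀ r ∈ E, p + r ∈ E)
    (hL : IsMinimalLeftIdealIn E L) : IsCompact L := by
  obtain ⟨q, hq⟩ := hL.1.1
  rw [← hL.image_add_right_eq hE hq]
  exact hEc.isCompact.image (Ultrafilter.continuous_add_left q)

end MinimalLeftIdeal

theorem IsCompact.exists_le_of_forall_exists_mem {α : Type*} {K : Set (Ultrafilter α)}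
    (hK : IsCompact K) {f : Filter α} (h : ∀ s ∈ f, ∃ u ∈ K, s ∈ u) : ∃ u ∈ K, ↑u ≤ f := by
  have hfin (F : Finset f.sets) : (K ∩ ⋂ s ∈ F, {u : Ultrafilter α | s.1 ∈ u}).Nonempty := by
    obtain ⟨u, huK, hu⟩ := h _ ((biInter_finset_mem F).mpr fun s _ => s.2)
    exact ⟨u, huK, mem_iInter₂.mpr fun s hs => mem_of_superset hu (biInter_subset_of_mem hs)⟩
  obtain ⟨u, huK, hu⟩ := hK.inter_iInter_nonempty _ (fun s => ultrafilter_isClosed_basic _) hfin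
  exact ⟨u, huK, fun s hs => mem_iInter.mp hu ⟨s, hs⟩⟩

variable [T2Space T]

theorem unifRecNear_exists_fix_general (S : AddSubsemigroup T)
    (hl : ∀ t : T, Continuous fun x : T => t + x)
    (hr : ∀ t : T, Continuous fun x : T => x + t)
    (e : T) (he : e + e = e)
    {X : Type u} [TopologicalSpace X] [T2Space X]
    (Ts : S → X → X) (L : Set (Ultrafilter S))
    (hL : IsMinimalLeftIdealIn (EStar S e) L) (x : X)
    (hur : UnifRecNear S e Ts x) :
    ∃ u ∈ L, TP Ts u x = x := by
  have hLc : IsCompact L :=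
    hL.isCompact isClosed_eStar fun p hp q hq => add_mem_eStar hl hr he hp hq
  obtain ⟨u, huL, hu⟩ := hLc.exists_le_of_forall_exists_mem
    (f := comap (fun s => Ts s x) (𝓝 x)) fun V hV => by
      obtain ⟨W, hW, hWV⟩ := mem_comap.mp hV
      obtain ⟨u, huL, hWu⟩ := (hur W hW).exists_mem_of_isLeftIdealIn hL.1
      exact ⟨u, huL, mem_of_superset hWu hWV⟩
  exact ⟨u, huL, lim_eq (map_le_iff_le_comap.mpr hu)⟩

/-- If `x` is uniformly recurrent near `e`, then some `u ∈ L` fixes `x`. -/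
theorem unifRecNear_exists_fix (S : AddSubsemigroup T) (hdense : Dense (S : Set T))
    (hl : ∀ t : T, Continuous fun x : T => t + x)
    (hr : ∀ t : T, Continuous fun x : T => x + t)
    (e : T) (he : e + e = e)
    {X : Type u} [TopologicalSpace X] [CompactSpace X] [T2Space X]
    (Ts : S → X → X) (hTcont : ∀ s, Continuous (Ts s))
    (hTact : ∀ s t z, Ts s (Ts t z) = Ts (s + t) z) (L : Set (Ultrafilter S))
    (hL : IsMinimalLeftIdealIn (EStar S e) L) (x : X)
    (hur : UnifRecNear S e Ts x) :
    ∃ u ∈ L, TP Ts u x = x :=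
  unifRecNear_exists_fix_general S hl hr e he Ts L hL x hur

end NearIdem
end

section
/- Let S be a dense subsemigroup of (T,+), e ∈ E(T), (X,⟨T_s⟩_{s∈S}) a dynamical system, and x ∈ X. If there exists an idempotent u in some minimal left ideal of e*_S with T_u(x) = x, then x is a uniformly recurrent point near e. -/
open Filter Topology Set

attribute [local instance] Ultrafilter.add Ultrafilter.addSemigroup

universe u

section NearIdem

variable {T : Type u} [AddSemigroup T] [TopologicalSpace T]

/-! If the set `B` of return times of `x` to a neighbourhood `W` were not syndetic near `e`, the
sets `−t + (S ∖ B)`, `t ∈ S ∩ U` for a suitable neighbourhood `U` of `e`, together with the traces on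
`S` of the neighbourhoods of `e` would have the finite intersection property, giving `q ∈ e*_S` with
`−t + (S ∖ B) ∈ q` for all such `t`. Since `q + u` lies in the minimal left ideal `L`, minimality
gives `L + (q + u) = L`, so `u = l + (q + u)` for some `l ∈ L`, and then
`T_{l+q}(x) = T_{l+q}(T_u x) = T_u x = x`. Hence `T_{t+b}(x) ∈ W` for `l`-many `t`, which may be
taken in `U`, and then `q`-many `b`, contradicting the choice of `q`. -/

theorem mem_EStar_iff_le_comap {S : AddSubsemigroup T} {e : T} {p : Ultrafilter S} :
    p ∈ EStar S e ↔ ↑p ≤ comap ((↑) : S → T) (𝓝 e) :=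
  tendsto_iff_comap

theorem exists_mem_EStar_of_not_syndeticNear {S : AddSubsemigroup T} {e : T} {B : Set S}
    (hB : ¬ SyndeticNear S e B) :
    ∃ U ∈ 𝓝 e, ∃ q ∈ EStar S e, ∀ t : S, (t : T) ∈ U → {s | t + s ∉ B} ∈ q := by
  simp only [SyndeticNear, not_forall, not_exists, not_and] at hB
  obtain ⟨U, hU, hB⟩ := hB
  let avoid (F : {F : Finset S // ∀ t ∈ F, (t : T) ∈ U}) : Filter S :=
    comap (↑) (𝓝 e) ⊓ 𝓟 {s | ∀ t ∈ F.1, t + s ∉ B}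
  have hdir : Directed (· ≥ ·) avoid := by
    classical
    rintro ⟨F, hF⟩ ⟨G, hG⟩
    refine ⟨⟨F ∪ G, fun t ht => (Finset.mem_union.1 ht).elim (hF t) (hG t)⟩, ?_, ?_⟩ <;>
      refine inf_le_inf_left _ (principal_mono.2 fun s hs t ht => hs t ?_) <;> simp [ht]
  have hne (F) : (avoid F).NeBot := by
    rw [inf_principal_neBot_iff]
    rintro _ ⟨V, hV, hsub⟩
    obtain ⟨s, hsV, hs⟩ := hB F.1 F.2 V hV
    exact ⟨s, hsub hsV, hs⟩
  have : Nonempty {F : Finset S // ∀ t ∈ F, (t : T) ∈ U} := ⟨⟨∅, by simp⟩⟩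
  have := iInf_neBot_of_directed' hdir hne
  obtain ⟨q, hq⟩ := exists_ultrafilter_le (⨅ F, avoid F)
  refine ⟨U, hU, q, ?_, fun t ht => ?_⟩
  · exact mem_EStar_iff_le_comap.2 ((hq.trans (iInf_le _ ⟨∅, by simp⟩)).trans inf_le_left)
  · have hle : ↑q ≤ avoid ⟨{t}, by simpa using ht⟩ := hq.trans (iInf_le _ _)
    exact hle (mem_inf_of_right (mem_principal.2 fun s hs => hs t (Finset.mem_singleton_self t)))

theorem IsMinimalLeftIdealIn.exists_add_eq {M : Type*} [AddSemigroup M]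
    {E L : Set (Ultrafilter M)} (hL : IsMinimalLeftIdealIn E L) {r v : Ultrafilter M}
    (hr : r ∈ L) (hv : v ∈ L) : ∃ l ∈ L, l + r = v := by
  obtain ⟨⟨w, hw⟩, hLE, hLadd⟩ := hL.1
  have hsub : (· + r) '' L ⊆ L := by
    rintro _ ⟨l, hl, rfl⟩
    exact hLadd l (hLE hl) r hr
  have hideal : IsLeftIdealIn E ((· + r) '' L) := by
    refine ⟨⟨w + r, w, hw, rfl⟩, hsub.trans hLE, ?_⟩
    rintro p hp _ ⟨l, hl, rfl⟩
    exact ⟨p + l, hLadd p hp l hl, add_assoc p l r⟩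
  rw [← hL.2 _ hideal hsub] at hv
  exact hv

section OrbitLimit

variable {M X : Type*} [TopologicalSpace X] [CompactSpace X]

theorem tendsto_TP (Ts : M → X → X) (p : Ultrafilter M) (x : X) :
    Tendsto (fun s => Ts s x) p (𝓝 (TP Ts p x)) := by
  rw [Tendsto, ← Ultrafilter.coe_map]
  exact Ultrafilter.le_nhds_lim _

theorem tendsto_add_TP [AddSemigroup M] {Ts : M → X → X} (hTcont : ∀ s, Continuous (Ts s))
    (hTact : ∀ s t z, Ts s (Ts t z) = Ts (s + t) z) (p q : Ultrafilter M) (x : X) :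
    Tendsto (fun s => Ts s x) ↑(p + q) (𝓝 (TP Ts p (TP Ts q x))) := by
  intro W hW
  refine (Ultrafilter.eventually_add p q _).2 ?_
  filter_upwards [tendsto_TP Ts p _ (eventually_mem_nhds_iff.2 hW)] with a ha
  filter_upwards [((hTcont a).tendsto _).comp (tendsto_TP Ts q x) ha] with b hb
  rwa [← hTact]

theorem TP_add [T2Space X] [AddSemigroup M] {Ts : M → X → X} (hTcont : ∀ s, Continuous (Ts s))
    (hTact : ∀ s t z, Ts s (Ts t z) = Ts (s + t) z) (p q : Ultrafilter M) (x : X) :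
    TP Ts (p + q) x = TP Ts p (TP Ts q x) :=
  tendsto_nhds_unique (tendsto_TP Ts _ x) (tendsto_add_TP hTcont hTact p q x)

end OrbitLimit

variable [T2Space T]

theorem unifRecNear_of_idempotent_fix_general (S : AddSubsemigroup T) (e : T)
    {X : Type u} [TopologicalSpace X] [CompactSpace X] [T2Space X]
    (Ts : S → X → X) (hTcont : ∀ s, Continuous (Ts s))
    (hTact : ∀ s t z, Ts s (Ts t z) = Ts (s + t) z) (x : X)
    (hfix : ∃ L, IsMinimalLeftIdealIn (EStar S e) L ∧
      ∃ u ∈ L, u + u = u ∧ TP Ts u x = x) :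
    UnifRecNear S e Ts x := by
  obtain ⟨L, hL, u, huL, -, hux⟩ := hfix
  intro W hW
  by_contra hB
  obtain ⟨U, hU, q, hqE, hq⟩ := exists_mem_EStar_of_not_syndeticNear hB
  obtain ⟨l, hlL, hlqu⟩ := hL.exists_add_eq (hL.1.2.2 q hqE u huL) huL
  have hx : TP Ts (l + q) x = x :=
    calc TP Ts (l + q) x = TP Ts (l + q) (TP Ts u x) := by rw [hux]
      _ = TP Ts (l + (q + u)) x := by rw [← TP_add hTcont hTact, add_assoc]
      _ = x := by rw [hlqu, hux]
  have hret : ∀ᶠ a in ↑l, ∀ᶠ b in ↑q, Ts (a + b) x ∈ W :=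
    (Ultrafilter.eventually_add l q _).1 (tendsto_TP Ts (l + q) x (hx.symm ▸ hW))
  obtain ⟨t, htW, htU⟩ := (hret.and (hL.1.2.1 hlL U hU)).exists
  obtain ⟨b, hbW, hbB⟩ := (htW.and (hq t htU)).exists
  exact hbB hbW

/-- If an idempotent of some minimal left ideal of `e*_S` fixes `x`, then
`x` is uniformly recurrent near `e`. -/
theorem unifRecNear_of_idempotent_fix (S : AddSubsemigroup T) (hdense : Dense (S : Set T))
    (hl : ∀ t : T, Continuous fun x : T => t + x)
    (hr : ∀ t : T, Continuous fun x : T => x + t)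
    (e : T) (he : e + e = e)
    {X : Type u} [TopologicalSpace X] [CompactSpace X] [T2Space X]
    (Ts : S → X → X) (hTcont : ∀ s, Continuous (Ts s))
    (hTact : ∀ s t z, Ts s (Ts t z) = Ts (s + t) z) (x : X)
    (hfix : ∃ L, IsMinimalLeftIdealIn (EStar S e) L ∧
      ∃ u ∈ L, u + u = u ∧ TP Ts u x = x) :
    UnifRecNear S e Ts x :=
  unifRecNear_of_idempotent_fix_general S e Ts hTcont hTact x hfix

end NearIdem
end

section
/- Let S be a semigroup, 𝒦 a filter on S such that 𝒦̄ = {p ∈ βS : 𝒦 ⊆ p} is a compact subsemigroup of βS, and A ⊆ S. Then A is a member of some idempotent in 𝒦̄ if and only if there exist a dynamical system (X,⟨T_s⟩_{s∈S}), points x, y ∈ X, and a neighbourhood U of y such that the pair (x,y) is jointly 𝒦-recurrent and A = {s ∈ S : T_s(x) ∈ U}. -/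
/-!
A member `A` of an idempotent `p ∈ 𝒦̄` is realised in the shift on `Bool ^ (S¹)`: take for `x`
the indicator of `A`, for `y` its `p`-limit `T_p x`, and for `U` the cylinder `{f | f 1 = true}`.
Since `T_{qp} = T_q ∘ T_p` in a compact Hausdorff system, `T_p y = T_{pp} x = y`, so both orbits
converge to `y` along `p`, which is joint `𝒦`-recurrence.

Conversely, joint `𝒦`-recurrence of `(x, y)` says exactly that some ultrafilter below `𝒦` sends
both orbits to `y`. Such ultrafilters form a closed subset of the compact semigroup `𝒦̄`, closed
under multiplication, so by Ellis' theorem it contains an idempotent `p`; then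
`A = {s | T_s x ∈ U} ∈ p`.
-/

open Filter Topology

attribute [local instance] Ultrafilter.mul Ultrafilter.semigroup

universe u

/-- `T_p(x) = p`-`lim_(s ∈ S) T_s(x)`. -/
noncomputable def TPmul {M : Type*} {X : Type*} [TopologicalSpace X]
    (Ts : M → X → X) (p : Ultrafilter M) (x : X) : X :=
  (p.map fun s => Ts s x).lim

theorem tendsto_TPmul {M X : Type*} [TopologicalSpace X] [CompactSpace X] (Ts : M → X → X)
    (p : Ultrafilter M) (x : X) : Tendsto (Ts · x) p (𝓝 (TPmul Ts p x)) :=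
  (p.map fun s => Ts s x).le_nhds_lim

section Ultrafilter

variable {α β : Type*}

theorem exists_ultrafilter_le_tendsto_iff {ι : Sort*} {f : Filter α} {l : Filter β}
    {p : ι → Prop} {s : ι → Set β} (hl : l.HasBasis p s) {g : α → β} :
    (∃ q : Ultrafilter α, ↑q ≤ f ∧ Tendsto g q l) ↔ ∀ i, p i → ∃ᶠ a in f, g a ∈ s i := by
  simp only [tendsto_iff_comap, ← le_inf_iff, exists_ultrafilter_iff]
  rw [inf_comm, (hl.comap g).inf_neBot_iff]
  simp only [frequently_iff, Set.inter_comm (g ⁻¹' _)]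
  rfl

theorem Ultrafilter.isClosed_setOf_tendsto (g : α → β) (l : Filter β) :
    IsClosed {q : Ultrafilter α | Tendsto g q l} := by
  simp only [tendsto_def, Set.ofPred_forall]
  exact isClosed_biInter fun V _ => ultrafilter_isClosed_basic _

end Ultrafilter

def JointlyRecurrent {S X : Type*} [TopologicalSpace X] (𝒦 : Filter S) (Ts : S → X → X)
    (x y : X) : Prop :=
  ∀ V ∈ 𝓝 y, ({s : S | Ts s x ∈ V ∧ Ts s y ∈ V})ᶜ ∉ 𝒦

theorem jointlyRecurrent_iff_exists_ultrafilter {S X : Type*} [TopologicalSpace X]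
    {𝒦 : Filter S} {Ts : S → X → X} {x y : X} :
    JointlyRecurrent 𝒦 Ts x y ↔
      ∃ p : Ultrafilter S, ↑p ≤ 𝒦 ∧ Tendsto (Ts · x) p (𝓝 y) ∧ Tendsto (Ts · y) p (𝓝 y) := by
  simp only [← tendsto_prod_iff' (s := fun s => (Ts s x, Ts s y)),
    exists_ultrafilter_le_tendsto_iff (𝓝 y).basis_sets.prod_self]
  -- `∃ᶠ s in 𝒦, P s` unfolds to `{s | P s}ᶜ ∉ 𝒦`
  rfl

section Dynamics

variable {S X : Type*} [Semigroup S] [TopologicalSpace X] {Ts : S → X → X}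

theorem tendsto_orbit_mul (hcont : ∀ s, Continuous (Ts s))
    (hact : ∀ s t z, Ts s (Ts t z) = Ts (s * t) z) {p q : Ultrafilter S} {x y z : X}
    (hx : Tendsto (Ts · x) p (𝓝 y)) (hy : Tendsto (Ts · y) q (𝓝 z)) :
    Tendsto (Ts · x) ↑(q * p) (𝓝 z) := by
  intro V hV
  change ∀ᶠ m in ↑(q * p), Ts m x ∈ V
  rw [Ultrafilter.eventually_mul]
  filter_upwards [hy (interior_mem_nhds.mpr hV)] with a ha
  filter_upwards [hx ((hcont a).continuousAt.preimage_mem_nhds (isOpen_interior.mem_nhds ha))]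
    with b hb
  rw [← hact]
  exact interior_subset hb

theorem TPmul_mul [CompactSpace X] [T2Space X] (hcont : ∀ s, Continuous (Ts s))
    (hact : ∀ s t z, Ts s (Ts t z) = Ts (s * t) z) (p q : Ultrafilter S) (x : X) :
    TPmul Ts (q * p) x = TPmul Ts q (TPmul Ts p x) :=
  tendsto_nhds_unique (tendsto_TPmul Ts _ x)
    (tendsto_orbit_mul hcont hact (tendsto_TPmul Ts p x) (tendsto_TPmul Ts q _))

theorem jointlyRecurrent_TPmul_of_idempotent [CompactSpace X] [T2Space X]
    (hcont : ∀ s, Continuous (Ts s)) (hact : ∀ s t z, Ts s (Ts t z) = Ts (s * t) z)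
    {𝒦 : Filter S} {p : Ultrafilter S} (hpK : ↑p ≤ 𝒦) (hpp : p * p = p) (x : X) :
    JointlyRecurrent 𝒦 Ts x (TPmul Ts p x) := by
  refine jointlyRecurrent_iff_exists_ultrafilter.mpr ⟨p, hpK, tendsto_TPmul Ts p x, ?_⟩
  convert tendsto_TPmul Ts p (TPmul Ts p x) using 2
  rw [← TPmul_mul hcont hact, hpp]

theorem exists_idempotent_tendsto_of_jointlyRecurrent (hcont : ∀ s, Continuous (Ts s))
    (hact : ∀ s t z, Ts s (Ts t z) = Ts (s * t) z) {𝒦 : Filter S}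
    (hcomp : IsCompact {p : Ultrafilter S | ↑p ≤ 𝒦})
    (hmul : ∀ p q : Ultrafilter S, ↑p ≤ 𝒦 → ↑q ≤ 𝒦 → ↑(p * q) ≤ 𝒦) {x y : X}
    (hrec : JointlyRecurrent 𝒦 Ts x y) :
    ∃ p : Ultrafilter S, ↑p ≤ 𝒦 ∧ p * p = p ∧ Tendsto (Ts · x) p (𝓝 y) := by
  set C := {q : Ultrafilter S | ↑q ≤ 𝒦 ∧ Tendsto (Ts · x) q (𝓝 y) ∧ Tendsto (Ts · y) q (𝓝 y)}
  have hC_nonempty : C.Nonempty := jointlyRecurrent_iff_exists_ultrafilter.mp hrec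
  have hC_compact : IsCompact C := hcomp.inter_right
    ((Ultrafilter.isClosed_setOf_tendsto _ _).inter (Ultrafilter.isClosed_setOf_tendsto _ _))
  have hC_mul : ∀ q ∈ C, ∀ r ∈ C, q * r ∈ C := fun q ⟨hqK, _, hqy⟩ r ⟨hrK, hrx, hry⟩ =>
    ⟨hmul q r hqK hrK, tendsto_orbit_mul hcont hact hrx hqy,
      tendsto_orbit_mul hcont hact hry hqy⟩
  obtain ⟨p, ⟨hpK, hpx, -⟩, hpp⟩ := exists_idempotent_in_compact_subsemigroup
    Ultrafilter.continuous_mul_left C hC_nonempty hC_compact hC_mul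
  exact ⟨p, hpK, hpp, hpx⟩

end Dynamics

section Shift

variable {S : Type*} [Semigroup S]

def rightShift (s : S) (f : WithOne S → Bool) : WithOne S → Bool :=
  fun t => f (t * s)

theorem continuous_rightShift (s : S) : Continuous (rightShift s) :=
  continuous_pi fun _ => continuous_apply _

theorem rightShift_rightShift (s t : S) (f : WithOne S → Bool) :
    rightShift s (rightShift t f) = rightShift (s * t) f := by
  funext u
  simp only [rightShift, WithOne.coe_mul, mul_assoc]

@[simp]
theorem rightShift_apply_one (s : S) (f : WithOne S → Bool) : rightShift s f 1 = f s := by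
  simp only [rightShift, one_mul]

end Shift

theorem mem_idempotent_iff_jointly_K_recurrent_general {S : Type u} [Semigroup S]
    (𝒦 : Filter S)
    (hcomp : IsCompact {p : Ultrafilter S | (p : Filter S) ≤ 𝒦})
    (hmul : ∀ p q : Ultrafilter S, (p : Filter S) ≤ 𝒦 → (q : Filter S) ≤ 𝒦 →
      ((p * q : Ultrafilter S) : Filter S) ≤ 𝒦)
    (A : Set S) :
    (∃ p : Ultrafilter S, (p : Filter S) ≤ 𝒦 ∧ p * p = p ∧ A ∈ p) ↔
      ∃ (X : Type u) (_ : TopologicalSpace X) (_ : CompactSpace X) (_ : T2Space X)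
        (Ts : S → X → X),
        (∀ s, Continuous (Ts s)) ∧ (∀ s t z, Ts s (Ts t z) = Ts (s * t) z) ∧
        ∃ (x y : X) (U : Set X), U ∈ nhds y ∧
          (∀ V ∈ nhds y, ({s : S | Ts s x ∈ V ∧ Ts s y ∈ V})ᶜ ∉ 𝒦) ∧
          A = {s : S | Ts s x ∈ U} := by
  classical
  constructor
  · rintro ⟨p, hpK, hpp, hAp⟩
    let x : WithOne S → Bool := fun t => decide (t ∈ ((↑) : S → WithOne S) '' A)
    have hU : IsClopen {f : WithOne S → Bool | f 1 = true} :=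
      (isClopen_discrete {true}).preimage (continuous_apply 1)
    refine ⟨WithOne S → Bool, inferInstance, inferInstance, inferInstance, rightShift,
      continuous_rightShift, rightShift_rightShift, x, TPmul rightShift p x, _,
      hU.isOpen.mem_nhds (hU.isClosed.mem_of_tendsto (tendsto_TPmul _ p x) ?_),
      jointlyRecurrent_TPmul_of_idempotent continuous_rightShift rightShift_rightShift hpK hpp x,
      ?_⟩
    · filter_upwards [hAp] with s hs
      simp [x, hs]
    · ext s
      simp [x]
  · rintro ⟨X, _, _, _, Ts, hcont, hact, x, y, U, hU, hrec, rfl⟩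
    obtain ⟨p, hpK, hpp, hpx⟩ :=
      exists_idempotent_tendsto_of_jointlyRecurrent hcont hact hcomp hmul hrec
    exact ⟨p, hpK, hpp, hpx hU⟩

/-- Dynamical characterization of members of idempotents in `𝒦̄` via joint
`𝒦`-recurrence. -/
theorem mem_idempotent_iff_jointly_K_recurrent {S : Type u} [Semigroup S]
    (𝒦 : Filter S) [𝒦.NeBot]
    (hne : {p : Ultrafilter S | (p : Filter S) ≤ 𝒦}.Nonempty)
    (hcomp : IsCompact {p : Ultrafilter S | (p : Filter S) ≤ 𝒦})
    (hmul : ∀ p q : Ultrafilter S, (p : Filter S) ≤ 𝒦 → (q : Filter S) ≤ 𝒦 →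
      ((p * q : Ultrafilter S) : Filter S) ≤ 𝒦)
    (A : Set S) :
    (∃ p : Ultrafilter S, (p : Filter S) ≤ 𝒦 ∧ p * p = p ∧ A ∈ p) ↔
      ∃ (X : Type u) (_ : TopologicalSpace X) (_ : CompactSpace X) (_ : T2Space X)
        (Ts : S → X → X),
        (∀ s, Continuous (Ts s)) ∧ (∀ s t z, Ts s (Ts t z) = Ts (s * t) z) ∧
        ∃ (x y : X) (U : Set X), U ∈ nhds y ∧
          (∀ V ∈ nhds y, ({s : S | Ts s x ∈ V ∧ Ts s y ∈ V})ᶜ ∉ 𝒦) ∧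
          A = {s : S | Ts s x ∈ U} :=
  mem_idempotent_iff_jointly_K_recurrent_general 𝒦 hcomp hmul A
end
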